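/- arXiv:1003.0169 — 4 statements merged into one kernel-verified Lean document; each statement's English description precedes it below -/
import Mathlib

section
/- Let 𝒞 be an abelian category. For i = 1, 2 let 0 → N_i →^{k_i} X_i →^{p_i} M_i → 0 be a short exact sequence in 𝒞 with extension class a_i ∈ Ext¹(M_i, N_i), and let f : N₁ → N₂ and g : M₁ → M₂ be morphisms. If f_∗ a₁ = g^∗ a₂ in Ext¹(M₁, N₂), then there exists a morphism φ : X₁ → X₂ such that φ ∘ k₁ = k₂ ∘ f and p₂ ∘ φ = g ∘ p₁. (Converse direction of Lemma 3.1.) -/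
open CategoryTheory Abelian

universe w v u

/-! In the derived category, `extClass` is the connecting morphism of the distinguished triangle
attached to a short exact sequence, so the hypothesis says that `f`, `g` and the connecting
morphisms form a commutative square. The axiom TR3 completes it to a morphism of triangles, and
its middle component comes from a morphism in `C` because the single functor is fully faithful. -/

namespace CategoryTheory.ShortComplex.ShortExact

variable {C : Type u} [Category.{v} C] [CategoryTheory.Abelian C]
  {S₁ S₂ : ShortComplex C} (hS₁ : S₁.ShortExact) (hS₂ : S₂.ShortExact)
  (f : S₁.X₁ ⟶ S₂.X₁) (g : S₁.X₃ ⟶ S₂.X₃)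

lemma singleδ_comp_map_shift_eq_of_extClass [HasExt.{w} C] [HasDerivedCategory C]
    (h : hS₁.extClass.comp (Ext.mk₀ f) (add_zero 1) =
      (Ext.mk₀ g).comp hS₂.extClass (zero_add 1)) :
    hS₁.singleδ ≫ ((DerivedCategory.singleFunctor C 0).map f)⟦(1 : ℤ)⟧' =
      (DerivedCategory.singleFunctor C 0).map g ≫ hS₂.singleδ := by
  have h' := congrArg Ext.hom h
  rwa [← Ext.hom_comp_singleFunctor_map_shift, ← Ext.singleFunctor_map_comp_hom,
    hS₁.extClass_hom, hS₂.extClass_hom] at h'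

lemma exists_hom_of_singleδ_comp_map_shift_eq [HasDerivedCategory C]
    (comm : hS₁.singleδ ≫ ((DerivedCategory.singleFunctor C 0).map f)⟦(1 : ℤ)⟧' =
      (DerivedCategory.singleFunctor C 0).map g ≫ hS₂.singleδ) :
    ∃ φ : S₁.X₂ ⟶ S₂.X₂, S₁.f ≫ φ = f ≫ S₂.f ∧ φ ≫ S₂.g = S₁.g ≫ g := by
  let F := DerivedCategory.singleFunctor C 0
  obtain ⟨b, hb₁, hb₂⟩ := Pretriangulated.complete_distinguished_triangle_morphism₂
    hS₁.singleTriangle hS₂.singleTriangle hS₁.singleTriangle_distinguished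
    hS₂.singleTriangle_distinguished (F.map f) (F.map g) comm
  obtain ⟨φ, rfl⟩ := F.map_surjective b
  refine ⟨φ, F.map_injective ?_, F.map_injective ?_⟩
  · rw [F.map_comp, F.map_comp]
    exact hb₁
  · rw [F.map_comp, F.map_comp]
    exact hb₂.symm

end CategoryTheory.ShortComplex.ShortExact

/-- Converse direction of Lemma 3.1: if `f⁎ a₁ = g⁎ a₂` in `Ext¹(M₁, N₂)`, then there
is a morphism of short exact sequences extending `f : N₁ ⟶ N₂` and `g : M₁ ⟶ M₂`. -/
theorem exists_hom_of_pushforward_eq_pullback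
    {C : Type u} [Category.{v} C] [CategoryTheory.Abelian C] [HasExt.{w} C]
    (S₁ S₂ : ShortComplex C) (hS₁ : S₁.ShortExact) (hS₂ : S₂.ShortExact)
    (f : S₁.X₁ ⟶ S₂.X₁) (g : S₁.X₃ ⟶ S₂.X₃)
    (h : hS₁.extClass.comp (Ext.mk₀ f) (add_zero 1) =
      (Ext.mk₀ g).comp hS₂.extClass (zero_add 1)) :
    ∃ φ : S₁.X₂ ⟶ S₂.X₂, S₁.f ≫ φ = f ≫ S₂.f ∧ φ ≫ S₂.g = S₁.g ≫ g :=
  have := HasDerivedCategory.standard C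
  hS₁.exists_hom_of_singleδ_comp_map_shift_eq hS₂ f g
    (hS₁.singleδ_comp_map_shift_eq_of_extClass hS₂ f g h)
end

section
/- Let V be an inner product space over ℂ and let u, w ∈ V be linearly independent vectors with ⟪u, u⟫ = ⟪w, w⟫ = 2. If the composite σ_u ∘ σ_w of the associated complex reflections has finite order exactly m, where m ∈ {2, 3, 4, 6}, then |⟪u, w⟫| = 2·cos(π/m). (Claim from the proof of Lemma 3.7.) -/
/-!
Write `T = σ_u σ_w`, `a = ⟪u, w⟫` and `t = |a|² - 2`. On the plane spanned by `u, w` the map `T`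
has trace `t` and determinant `1`, so `T² w = t T w - w`, and therefore
`T^(n+1) w = S_n(t) T w - S_{n-1}(t) w` with the rescaled Chebyshev polynomials `S_n`.
As `T w = a u - w`, linear independence turns `T^m = 1` into
`a = 0 ∨ (S_{m-1}(t) = 0 ∧ S_{m-2}(t) = -1)`. For `m ∈ {2, 3, 4, 6}` this leaves
`|a|² = 4 cos² (π / m)` besides solutions of smaller order: `a = 0` gives `T² = 1` (the two
reflections commute), and `|a| = 1` gives `T³ = 1`, because `T - 1` maps `V` into the plane,
so that `(T² - t T + 1) (T - 1) = 0` on all of `V`.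
-/

open scoped InnerProductSpace

/-- The complex reflection associated to a vector `u` with `⟪u, u⟫ = 2`:
`σ_u (v) = v - ⟪u, v⟫ • u`. -/
noncomputable def complexReflection {V : Type*} [NormedAddCommGroup V]
    [InnerProductSpace ℂ V] (u : V) : Module.End ℂ V where
  toFun v := v - (⟪u, v⟫_ℂ) • u
  map_add' x y := by
    simp only [inner_add_right, add_smul]
    abel
  map_smul' c x := by
    simp only [inner_smul_right, RingHom.id_apply, smul_sub, smul_smul]

open ComplexConjugate Polynomial Polynomial.Chebyshev

theorem Module.End.pow_succ_apply_eq_S_eval {R M : Type*} [CommRing R] [AddCommGroup M]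
    [Module R M] {f : Module.End R M} {t : R} {x : M} (h : (f ^ 2) x = t • f x - x) (n : ℕ) :
    (f ^ (n + 1)) x = (S R n).eval t • f x - (S R (n - 1)).eval t • x := by
  induction n with
  | zero => simp
  | succ n ih =>
    rw [pow_succ', Module.End.mul_apply, ih, map_sub, map_smul, map_smul, ← Module.End.mul_apply,
      ← sq, h, Nat.cast_succ, add_sub_cancel_right, S_add_one, eval_sub, eval_mul, eval_X]
    module

namespace complexReflection

variable {V : Type*} [NormedAddCommGroup V] [InnerProductSpace ℂ V] {u w : V}

theorem apply (u v : V) : complexReflection u v = v - ⟪u, v⟫_ℂ • u := rfl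

theorem mul_self (hu : ⟪u, u⟫_ℂ = 2) : complexReflection u * complexReflection u = 1 := by
  ext v
  simp only [Module.End.mul_apply, apply, inner_sub_right, inner_smul_right, hu,
    Module.End.one_apply]
  module

theorem commute_of_inner_eq_zero (h : ⟪u, w⟫_ℂ = 0) :
    Commute (complexReflection u) (complexReflection w) := by
  have h' : ⟪w, u⟫_ℂ = 0 := inner_eq_zero_symm.mp h
  ext v
  simp only [Module.End.mul_apply, apply, inner_sub_right, inner_smul_right, h, h']
  module

theorem mul_apply (v : V) : (complexReflection u * complexReflection w) v =
    v - ⟪u, v⟫_ℂ • u - ⟪w, v⟫_ℂ • w + (⟪w, v⟫_ℂ * ⟪u, w⟫_ℂ) • u := by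
  rw [Module.End.mul_apply, apply, apply, inner_sub_right, inner_smul_right]
  module

theorem mul_apply_right (hw : ⟪w, w⟫_ℂ = 2) :
    (complexReflection u * complexReflection w) w = ⟪u, w⟫_ℂ • u - w := by
  rw [mul_apply, hw]
  module

theorem mul_apply_left (hu : ⟪u, u⟫_ℂ = 2) :
    (complexReflection u * complexReflection w) u =
      ((‖⟪u, w⟫_ℂ‖ : ℂ) ^ 2 - 1) • u - conj ⟪u, w⟫_ℂ • w := by
  rw [mul_apply, hu, ← inner_conj_symm w u, ← Complex.conj_mul']
  module

theorem mul_sq_apply_right (hu : ⟪u, u⟫_ℂ = 2) (hw : ⟪w, w⟫_ℂ = 2) :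
    ((complexReflection u * complexReflection w) ^ 2) w =
      ((‖⟪u, w⟫_ℂ‖ : ℂ) ^ 2 - 2) • (complexReflection u * complexReflection w) w - w := by
  rw [sq, Module.End.mul_apply, mul_apply_right hw, map_sub, map_smul, mul_apply_left hu,
    mul_apply_right hw]
  linear_combination (norm := module) (-Complex.mul_conj' ⟪u, w⟫_ℂ) • w

theorem mul_sq_apply_left (hu : ⟪u, u⟫_ℂ = 2) (hw : ⟪w, w⟫_ℂ = 2) :
    ((complexReflection u * complexReflection w) ^ 2) u =
      ((‖⟪u, w⟫_ℂ‖ : ℂ) ^ 2 - 2) • (complexReflection u * complexReflection w) u - u := by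
  rw [sq, Module.End.mul_apply, mul_apply_left hu, map_sub, map_smul, map_smul, mul_apply_left hu,
    mul_apply_right hw]
  linear_combination (norm := module) (-Complex.conj_mul' ⟪u, w⟫_ℂ) • u

theorem mul_apply_sub_mem_span (v : V) :
    (complexReflection u * complexReflection w) v - v ∈ Submodule.span ℂ {u, w} := by
  rw [Submodule.mem_span_pair]
  exact ⟨⟪w, v⟫_ℂ * ⟪u, w⟫_ℂ - ⟪u, v⟫_ℂ, -⟪w, v⟫_ℂ, by rw [mul_apply]; module⟩

theorem mul_sq_sub_smul_add_one_mul_sub_one (hu : ⟪u, u⟫_ℂ = 2) (hw : ⟪w, w⟫_ℂ = 2) :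
    ((complexReflection u * complexReflection w) ^ 2 -
      ((‖⟪u, w⟫_ℂ‖ : ℂ) ^ 2 - 2) • (complexReflection u * complexReflection w) + 1) *
        (complexReflection u * complexReflection w - 1) = 0 := by
  have hTu := mul_sq_apply_left hu hw
  have hTw := mul_sq_apply_right hu hw
  set T := complexReflection u * complexReflection w
  have hker : Submodule.span ℂ {u, w} ≤
      LinearMap.ker (T ^ 2 - ((‖⟪u, w⟫_ℂ‖ : ℂ) ^ 2 - 2) • T + 1) := by
    rw [Submodule.span_le, Set.insert_subset_iff, Set.singleton_subset_iff]
    simp only [SetLike.mem_coe, LinearMap.mem_ker, LinearMap.add_apply, LinearMap.sub_apply,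
      LinearMap.smul_apply, Module.End.one_apply, hTu, hTw]
    constructor <;> abel
  exact LinearMap.ext fun v => hker (mul_apply_sub_mem_span v)

theorem mul_pow_three_eq_one (hu : ⟪u, u⟫_ℂ = 2) (hw : ⟪w, w⟫_ℂ = 2) (h : ‖⟪u, w⟫_ℂ‖ = 1) :
    (complexReflection u * complexReflection w) ^ 3 = 1 := by
  have hann := mul_sq_sub_smul_add_one_mul_sub_one hu hw
  rw [h, Complex.ofReal_one, one_pow, show (1 : ℂ) - 2 = -1 by norm_num, neg_one_smul,
    sub_neg_eq_add] at hann
  rw [← sub_eq_zero, ← hann]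
  noncomm_ring

theorem mul_sq_eq_one_of_inner_eq_zero (hu : ⟪u, u⟫_ℂ = 2) (hw : ⟪w, w⟫_ℂ = 2)
    (h : ⟪u, w⟫_ℂ = 0) : (complexReflection u * complexReflection w) ^ 2 = 1 := by
  rw [(commute_of_inner_eq_zero h).mul_pow, sq, sq, mul_self hu, mul_self hw, one_mul]

theorem inner_eq_zero_or_S_eval_of_mul_pow_eq_one (hind : LinearIndependent ℂ ![u, w])
    (hu : ⟪u, u⟫_ℂ = 2) (hw : ⟪w, w⟫_ℂ = 2) {n : ℕ}
    (h : (complexReflection u * complexReflection w) ^ (n + 1) = 1) :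
    ⟪u, w⟫_ℂ = 0 ∨ (S ℂ n).eval ((‖⟪u, w⟫_ℂ‖ : ℂ) ^ 2 - 2) = 0 ∧
      (S ℂ (n - 1)).eval ((‖⟪u, w⟫_ℂ‖ : ℂ) ^ 2 - 2) = -1 := by
  set t : ℂ := (‖⟪u, w⟫_ℂ‖ : ℂ) ^ 2 - 2
  have hpow := Module.End.pow_succ_apply_eq_S_eval (mul_sq_apply_right hu hw) n
  rw [h, Module.End.one_apply, mul_apply_right hw] at hpow
  obtain ⟨hcoeff_u, hcoeff_w⟩ := hind.eq_zero_of_pair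
    (s := (S ℂ n).eval t * ⟪u, w⟫_ℂ) (t := -((S ℂ n).eval t + (S ℂ (n - 1)).eval t + 1))
    (by linear_combination (norm := module) -hpow)
  rcases mul_eq_zero.mp hcoeff_u with hS | ha
  · exact .inr ⟨hS, by linear_combination -hcoeff_w - hS⟩
  · exact .inl ha

theorem inner_eq_zero_of_mul_sq_eq_one (hind : LinearIndependent ℂ ![u, w])
    (hu : ⟪u, u⟫_ℂ = 2) (hw : ⟪w, w⟫_ℂ = 2)
    (h : (complexReflection u * complexReflection w) ^ 2 = 1) : ⟪u, w⟫_ℂ = 0 := by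
  rcases inner_eq_zero_or_S_eval_of_mul_pow_eq_one (n := 1) hind hu hw h with ha | ⟨-, hS⟩
  · exact ha
  · norm_num at hS

theorem orderOf_mul_dvd_two_of_inner_eq_zero (hu : ⟪u, u⟫_ℂ = 2) (hw : ⟪w, w⟫_ℂ = 2)
    (h : ⟪u, w⟫_ℂ = 0) : orderOf (complexReflection u * complexReflection w) ∣ 2 :=
  orderOf_dvd_of_pow_eq_one (mul_sq_eq_one_of_inner_eq_zero hu hw h)

theorem norm_inner_sq_eq_one_of_orderOf_eq_three (hind : LinearIndependent ℂ ![u, w])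
    (hu : ⟪u, u⟫_ℂ = 2) (hw : ⟪w, w⟫_ℂ = 2)
    (h : orderOf (complexReflection u * complexReflection w) = 3) : ‖⟪u, w⟫_ℂ‖ ^ 2 = 1 := by
  have hpow := h ▸ pow_orderOf_eq_one (complexReflection u * complexReflection w)
  rcases inner_eq_zero_or_S_eval_of_mul_pow_eq_one (n := 2) hind hu hw hpow with ha | ⟨-, hS⟩
  · exact absurd (h ▸ orderOf_mul_dvd_two_of_inner_eq_zero hu hw ha) (by norm_num)
  · norm_num at hS
    exact_mod_cast (by linear_combination hS : (‖⟪u, w⟫_ℂ‖ : ℂ) ^ 2 = 1)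

theorem norm_inner_sq_eq_two_of_orderOf_eq_four (hind : LinearIndependent ℂ ![u, w])
    (hu : ⟪u, u⟫_ℂ = 2) (hw : ⟪w, w⟫_ℂ = 2)
    (h : orderOf (complexReflection u * complexReflection w) = 4) : ‖⟪u, w⟫_ℂ‖ ^ 2 = 2 := by
  have hpow := h ▸ pow_orderOf_eq_one (complexReflection u * complexReflection w)
  rcases inner_eq_zero_or_S_eval_of_mul_pow_eq_one (n := 3) hind hu hw hpow with ha | ⟨-, hS⟩
  · exact absurd (h ▸ orderOf_mul_dvd_two_of_inner_eq_zero hu hw ha) (by norm_num)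
  · norm_num [S_two] at hS
    exact_mod_cast (by linear_combination hS : (‖⟪u, w⟫_ℂ‖ : ℂ) ^ 2 = 2)

theorem norm_inner_sq_eq_three_of_orderOf_eq_six (hind : LinearIndependent ℂ ![u, w])
    (hu : ⟪u, u⟫_ℂ = 2) (hw : ⟪w, w⟫_ℂ = 2)
    (h : orderOf (complexReflection u * complexReflection w) = 6) : ‖⟪u, w⟫_ℂ‖ ^ 2 = 3 := by
  have hpow := h ▸ pow_orderOf_eq_one (complexReflection u * complexReflection w)
  rcases inner_eq_zero_or_S_eval_of_mul_pow_eq_one (n := 5) hind hu hw hpow with ha | ⟨hS5, hS4⟩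
  · exact absurd (h ▸ orderOf_mul_dvd_two_of_inner_eq_zero hu hw ha) (by norm_num)
  set t : ℂ := (‖⟪u, w⟫_ℂ‖ : ℂ) ^ 2 - 2
  have hS3 : S ℂ 3 = X * S ℂ 2 - S ℂ 1 := S_add_two ℂ 1
  have hS4' : S ℂ 4 = X * S ℂ 3 - S ℂ 2 := S_add_two ℂ 2
  have hS5' : S ℂ 5 = X * S ℂ 4 - S ℂ 3 := S_add_two ℂ 3
  norm_num [hS5', hS4', hS3, S_two] at hS5 hS4
  have hroots : t * ((t - 1) * (t + 1)) = 0 := by linear_combination t * hS4 - hS5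
  rcases mul_eq_zero.mp hroots with h0 | hpm
  · rw [h0] at hS4
    norm_num at hS4
  rcases mul_eq_zero.mp hpm with h1 | hm1
  · exact_mod_cast (by linear_combination h1 : (‖⟪u, w⟫_ℂ‖ : ℂ) ^ 2 = 3)
  · have hnorm : ‖⟪u, w⟫_ℂ‖ = 1 := by
      have : ‖⟪u, w⟫_ℂ‖ ^ 2 = 1 := by
        exact_mod_cast (by linear_combination hm1 : (‖⟪u, w⟫_ℂ‖ : ℂ) ^ 2 = 1)
      exact (pow_eq_one_iff_of_nonneg (norm_nonneg _) two_ne_zero).mp this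
    exact absurd (h ▸ orderOf_dvd_of_pow_eq_one (mul_pow_three_eq_one hu hw hnorm))
      (by norm_num)

end complexReflection

/-- Claim from the proof of Lemma 3.7: if `u, w` are linearly independent with
`⟪u, u⟫ = ⟪w, w⟫ = 2` and `σ_u ∘ σ_w` has finite order exactly `m ∈ {2, 3, 4, 6}`,
then `|⟪u, w⟫| = 2 cos (π / m)`. -/
theorem abs_inner_eq_two_cos_of_orderOf
    {V : Type*} [NormedAddCommGroup V] [InnerProductSpace ℂ V] (u w : V)
    (hind : LinearIndependent ℂ ![u, w]) (hu : ⟪u, u⟫_ℂ = 2) (hw : ⟪w, w⟫_ℂ = 2)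
    (m : ℕ) (hm : m ∈ ({2, 3, 4, 6} : Set ℕ))
    (hord : orderOf (complexReflection u * complexReflection w) = m) :
    ‖⟪u, w⟫_ℂ‖ = 2 * Real.cos (Real.pi / m) := by
  rw [← Real.sqrt_sq (norm_nonneg ⟪u, w⟫_ℂ)]
  rcases hm with rfl | rfl | rfl | rfl
  · rw [complexReflection.inner_eq_zero_of_mul_sq_eq_one hind hu hw (hord ▸ pow_orderOf_eq_one _)]
    norm_num
  · rw [complexReflection.norm_inner_sq_eq_one_of_orderOf_eq_three hind hu hw hord]
    norm_num
  · rw [complexReflection.norm_inner_sq_eq_two_of_orderOf_eq_four hind hu hw hord]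
    norm_num
    ring
  · rw [complexReflection.norm_inner_sq_eq_three_of_orderOf_eq_six hind hu hw hord]
    norm_num
    ring
end

section
/- Let ι be a finite set and G a simple graph on ι that is acyclic (a forest). Let A : ι → ι → ℂ satisfy A i j = conj(A j i) for all i, j (Hermitian symmetry) and A i j = 0 whenever i ≠ j and i, j are not adjacent in G. Then there exists c : ι → ℂ with |c i| = 1 for all i such that c i · conj(c j) · A i j = |A i j| for all i ≠ j. (Rescaling claim from the proof of Lemma 3.7, using that the Coxeter graph of a Weyl group is a forest: the vectors v''_s can be multiplied by unit scalars so that all pairings ⟨v'_s, v'_{s'}⟩ become the nonnegative real numbers 2cos(π/m'_{s,s'}).) -/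
/-!
The phases `φ i j = A i j / |A i j|` of a Hermitian `A` satisfy `φ j i = (φ i j)⁻¹`, i.e. they
form a circle-valued 1-cocycle on the edges of `G`. On a forest every such cocycle is a
coboundary: fixing a root in each component and letting `c i` be the product of the phases along
the unique path from the root to `i` gives `c j = c i * φ i j` for every edge, and then
`c i * conj (c j) * A i j = conj (φ i j) * A i j = |A i j|`.
-/

open scoped ComplexConjugate

namespace SimpleGraph

variable {V M : Type*} [Group M] {G : SimpleGraph V}

def Walk.dartProd (φ : V → V → M) {u v : V} (p : G.Walk u v) : M :=
  (p.darts.map fun d => φ d.fst d.snd).prod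

@[simp]
lemma Walk.dartProd_concat (φ : V → V → M) {u v w : V} (p : G.Walk u v) (h : G.Adj v w) :
    (p.concat h).dartProd φ = p.dartProd φ * φ v w := by
  simp [dartProd, darts_concat]

@[simp]
lemma Walk.dartProd_copy (φ : V → V → M) {u v u' v' : V} (p : G.Walk u v) (hu : u = u')
    (hv : v = v') : (p.copy hu hv).dartProd φ = p.dartProd φ := by
  subst hu hv
  rfl

/-- Of two paths from `r` ending at adjacent vertices, one extends the other by that edge. -/
lemma IsAcyclic.dartProd_eq_mul_of_adj (hG : G.IsAcyclic) {φ : V → V → M}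
    (hφ : ∀ i j, G.Adj i j → φ j i = (φ i j)⁻¹) {r i j : V} {p : G.Walk r i} {q : G.Walk r j}
    (hp : p.IsPath) (hq : q.IsPath) (h : G.Adj i j) :
    q.dartProd φ = p.dartProd φ * φ i j := by
  classical
  by_cases hi : i ∈ q.support
  · rw [hG.path_concat hp hq h hi, Walk.dartProd_concat]
  · have hj := hG.mem_support_of_ne_mem_support_of_adj_of_isPath hp hq h hi
    rw [hG.path_concat hq hp h.symm hj, Walk.dartProd_concat, hφ i j h, inv_mul_cancel_right]

theorem IsAcyclic.exists_eq_mul_of_adj (hG : G.IsAcyclic) (φ : V → V → M)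
    (hφ : ∀ i j, G.Adj i j → φ j i = (φ i j)⁻¹) :
    ∃ c : V → M, ∀ i j, G.Adj i j → c j = c i * φ i j := by
  classical
  let root (i : V) : V := (G.connectedComponentMk i).out
  have path (i : V) : G.Path (root i) i :=
    (ConnectedComponent.eq.mp (G.connectedComponentMk i).out_eq).some.toPath
  refine ⟨fun i => (path i).1.dartProd φ, fun i j h => ?_⟩
  dsimp only
  have hroot : root i = root j := by
    simp only [root, ConnectedComponent.eq.mpr h.reachable]
  rw [← Walk.dartProd_copy φ (path j).1 hroot.symm rfl]
  exact hG.dartProd_eq_mul_of_adj hφ (path i).2 ((Walk.isPath_copy ..).mpr (path j).2) h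

end SimpleGraph

namespace Complex

/-- `z / |z|` for `z ≠ 0`, and `1` for `z = 0`. -/
noncomputable def circlePhase (z : ℂ) : Circle := (z.arg : Real.Angle).toCircle

lemma coe_circlePhase (z : ℂ) : (z.circlePhase : ℂ) = exp (z.arg * I) :=
  rfl

/-- Taking the angle modulo `2π` makes this hold also on the negative real axis, where
`arg (conj z) = arg z = π`. -/
lemma circlePhase_conj (z : ℂ) : (conj z).circlePhase = z.circlePhase⁻¹ := by
  rw [circlePhase, arg_conj_coe_angle, Real.Angle.toCircle_neg, circlePhase]

lemma conj_circlePhase_mul_self (z : ℂ) : conj (z.circlePhase : ℂ) * z = ‖z‖ := by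
  nth_rw 2 [← norm_mul_exp_arg_mul_I z]
  rw [← coe_circlePhase, mul_left_comm, ← Circle.coe_inv_eq_conj, ← Circle.coe_mul,
    inv_mul_cancel, Circle.coe_one, mul_one]

end Complex

theorem exists_unit_rescaling_of_forest_general
    {ι : Type*} (G : SimpleGraph ι) (hG : G.IsAcyclic)
    (A : ι → ι → ℂ) (herm : ∀ i j, A i j = conj (A j i))
    (hzero : ∀ i j, i ≠ j → ¬ G.Adj i j → A i j = 0) :
    ∃ c : ι → ℂ, (∀ i, ‖c i‖ = 1) ∧
      ∀ i j, i ≠ j → c i * conj (c j) * A i j = ((‖A i j‖ : ℝ) : ℂ) := by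
  obtain ⟨c, hc⟩ := hG.exists_eq_mul_of_adj (fun i j => (A i j).circlePhase)
    fun i j _ => by rw [herm j i, Complex.circlePhase_conj]
  refine ⟨fun i => c i, fun i => Circle.norm_coe _, fun i j hij => ?_⟩
  by_cases h : G.Adj i j
  · dsimp only
    rw [hc i j h, Circle.coe_mul, map_mul, ← Circle.coe_inv_eq_conj (c i), ← mul_assoc,
      ← Circle.coe_mul, mul_inv_cancel, Circle.coe_one, one_mul,
      Complex.conj_circlePhase_mul_self]
  · simp [hzero i j hij h]

/-- Rescaling claim from the proof of Lemma 3.7: if `G` is an acyclic simple graph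
(a forest) on a finite set `ι`, and `A : ι → ι → ℂ` is Hermitian and vanishes off the
diagonal on non-adjacent pairs, then there are unit scalars `c i` with
`c i * conj (c j) * A i j = |A i j|` for all `i ≠ j`. -/
theorem exists_unit_rescaling_of_forest
    {ι : Type*} [Fintype ι] (G : SimpleGraph ι) (hG : G.IsAcyclic)
    (A : ι → ι → ℂ) (herm : ∀ i j, A i j = conj (A j i))
    (hzero : ∀ i j, i ≠ j → ¬ G.Adj i j → A i j = 0) :
    ∃ c : ι → ℂ, (∀ i, ‖c i‖ = 1) ∧
      ∀ i j, i ≠ j → c i * conj (c j) * A i j = ((‖A i j‖ : ℝ) : ℂ) :=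
  exists_unit_rescaling_of_forest_general G hG A herm hzero
end

section
/- Let V be an inner product space over ℂ, S a finite set, and (v_s)_{s∈S} a family of vectors with ⟪v_s, v_s⟫ = 2 for all s, such that v_s and v_{s'} are linearly independent for s ≠ s'. For s ≠ s' let m(s, s') denote the order of the composite σ_{v_s} ∘ σ_{v_{s'}} of the associated complex reflections, and assume m(s, s') ∈ {2, 3, 4, 6} for all s ≠ s'. Assume moreover that the simple graph on S with an edge {s, s'} exactly when m(s, s') > 2 is acyclic (a forest). Then there exist scalars c : S → ℂ with |c_s| = 1 for all s, such that ⟪c_s v_s, c_{s'} v_{s'}⟫ = 2·cos(π/m(s, s')) for all s ≠ s'. (Abstract form of Lemma 3.7.) -/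
/-!
For a pair `u, w` with `a = ⟪u, w⟫`, the product `T = σ_u σ_w` satisfies `T² u = t • T u - u`
with `t = ‖a‖² - 2`, so `T ^ n u = S_{n-1}(t) • T u - S_{n-2}(t) • u` for the Chebyshev
polynomials `S`. When `a ≠ 0`, comparing coefficients of `u` and `w` in `T ^ n u = u` gives
`S_{n-1}(t) = 0` and `S_{n-2}(t) = -1`, and for `n ∈ {2, 3, 4, 6}` this forces
`t + 2 = 4 cos² (π / n)`, except for the root `t = -1` at `n = 6`: there `‖a‖ = 1`, the two
reflections satisfy the braid relation and `T` has order `3`. When `a = 0` the reflections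
commute, so `n = 2`. Hence `‖⟪v s, v s'⟫‖ = 2 cos (π / m s s')`, and it remains to remove the
phases: they form a circle-valued cocycle on the forest (the pairings vanish off its edges), and on
a forest every cocycle is a coboundary `(c s)⁻¹ * c s'`.
-/

open Polynomial Polynomial.Chebyshev Real
open scoped InnerProductSpace ComplexConjugate

theorem Module.End.pow_apply_eq_chebyshev_S {R M : Type*} [CommRing R] [AddCommGroup M]
    [Module R M] {f : Module.End R M} {x : M} {t : R} (h : (f ^ 2) x = t • f x - x) (n : ℕ) :
    (f ^ n) x = (S R (n - 1)).eval t • f x - (S R (n - 2)).eval t • x := by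
  induction n using Nat.twoStepInduction with
  | zero => simp
  | one => simp
  | more n ih₀ ih₁ =>
    have hrec : (f ^ (n + 2)) x = t • (f ^ (n + 1)) x - (f ^ n) x := by
      rw [pow_add, Module.End.mul_apply, h, map_sub, map_smul, ← Module.End.mul_apply,
        ← pow_succ]
    rw [hrec, ih₀, ih₁]
    push_cast
    rw [show (n : ℤ) + 2 - 1 = n + 1 by ring, show (n : ℤ) + 1 - 1 = n by ring,
      show (n : ℤ) + 2 - 2 = n by ring, show (n : ℤ) + 1 - 2 = n - 1 by ring,
      S_add_one, S_eq R n]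
    simp only [eval_sub, eval_mul, eval_X]
    module

theorem add_two_eq_sq_two_cos_of_S_eval {n : ℕ} (hn : n ∈ ({2, 3, 4, 6} : Set ℕ)) {t : ℝ}
    (h₁ : (S ℝ (n - 1)).eval t = 0) (h₂ : (S ℝ (n - 2)).eval t = -1) :
    t + 2 = (2 * cos (π / n)) ^ 2 ∨ (n = 6 ∧ t = -1) := by
  have hS (k : ℤ) : (S ℝ (k + 2)).eval t = t * (S ℝ (k + 1)).eval t - (S ℝ k).eval t := by
    simp [S_add_two]
  have e₂ := hS 0
  have e₃ := hS 1
  have e₄ := hS 2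
  have e₅ := hS 3
  norm_num [S_zero, S_one] at e₂ e₃ e₄ e₅
  rcases hn with rfl | rfl | rfl | rfl
  · norm_num at h₂
  · norm_num at h₂
    norm_num [h₂]
  · norm_num [e₂] at h₂
    norm_num
    linear_combination h₂ - Real.sq_sqrt (zero_le_two : (0 : ℝ) ≤ 2)
  · norm_num [e₅, e₄, e₃, e₂] at h₁ h₂
    have ht : (t - 1) * (t + 1) = 0 := by
      linear_combination (-(1 / 2) + t ^ 2 / 2) * h₂ - t / 2 * h₁
    rcases mul_eq_zero.mp ht with ht | ht
    · left
      norm_num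
      linear_combination ht - Real.sq_sqrt (zero_le_three : (0 : ℝ) ≤ 3)
    · exact Or.inr ⟨rfl, by linarith⟩

theorem Real.cos_pi_div_nonneg {x : ℝ} (hx : 2 ≤ x) : 0 ≤ cos (π / x) :=
  cos_nonneg_of_mem_Icc ⟨by linarith [pi_pos, div_nonneg pi_pos.le (zero_le_two.trans hx)],
    div_le_div_of_nonneg_left pi_pos.le two_pos hx⟩

theorem Real.cos_pi_div_pos {x : ℝ} (hx : 2 < x) : 0 < cos (π / x) :=
  cos_pos_of_mem_Ioo ⟨by linarith [pi_pos, div_pos pi_pos (two_pos.trans hx)],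
    div_lt_div_of_pos_left pi_pos two_pos hx⟩

namespace SimpleGraph

theorem deleteEdges_lt_of_adj {S : Type*} {G : SimpleGraph S} {x y : S} (h : G.Adj x y) :
    G.deleteEdges {s(x, y)} < G :=
  lt_of_le_of_ne (deleteEdges_le _) fun heq => by
    have := heq ▸ h
    simp at this

theorem IsAcyclic.exists_forall_adj_inv_mul_eq {S K : Type*} [Finite S] [Group K]
    {G : SimpleGraph S} (hG : G.IsAcyclic) (φ : S → S → K)
    (hφ : ∀ x y, G.Adj x y → φ y x = (φ x y)⁻¹) :
    ∃ c : S → K, ∀ x y, G.Adj x y → (c x)⁻¹ * c y = φ x y := by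
  classical
  induction G using WellFoundedLT.induction with
  | _ G ih =>
  by_cases hbot : G = ⊥
  · exact ⟨1, fun x y h => by simp [hbot] at h⟩
  obtain ⟨x₀, y₀, h₀⟩ : ∃ x y, G.Adj x y := by
    by_contra! h
    exact hbot (by ext x y; simpa using h x y)
  set G' := G.deleteEdges {s(x₀, y₀)}
  obtain ⟨c, hc⟩ := ih G' (deleteEdges_lt_of_adj h₀) (hG.anti (deleteEdges_le _))
    fun x y h => hφ x y (deleteEdges_le _ h)
  have hsep : ¬ G'.Reachable y₀ x₀ := fun h =>
    isAcyclic_iff_forall_adj_isBridge.mp hG h₀ h.symm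
  -- Left translation of `c` on the component of `y₀` in `G'` repairs the deleted edge.
  set g := c x₀ * φ x₀ y₀ * (c y₀)⁻¹
  refine ⟨fun x => if G'.Reachable y₀ x then g * c x else c x, fun x y hxy => ?_⟩
  by_cases he : s(x, y) = s(x₀, y₀)
  · rcases Sym2.eq_iff.mp he with ⟨rfl, rfl⟩ | ⟨rfl, rfl⟩
    · simp [hsep, g, mul_assoc]
    · simp [hsep, g, mul_assoc, hφ x y hxy]
  · have hxy' : G'.Adj x y := by simpa [G', deleteEdges_adj, hxy] using he
    have hreach : G'.Reachable y₀ x ↔ G'.Reachable y₀ y :=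
      ⟨fun h => h.trans hxy'.reachable, fun h => h.trans hxy'.symm.reachable⟩
    by_cases hx : G'.Reachable y₀ x
    · simp [hx, hreach.mp hx, mul_assoc, hc x y hxy']
    · simp [hx, hreach.not.mp hx, hc x y hxy']

end SimpleGraph

theorem Circle.exists_mul_eq_norm (z : ℂ) : ∃ ζ : Circle, ζ * z = ‖z‖ := by
  refine ⟨Circle.exp (-z.arg), ?_⟩
  conv_lhs => rw [← Complex.norm_mul_exp_arg_mul_I z]
  rw [Circle.coe_exp, mul_left_comm, ← Complex.exp_add]
  simp

theorem Circle.eq_inv_of_mul_eq_norm {z : ℂ} (hz : z ≠ 0) {ζ ξ : Circle} (hζ : ζ * z = ‖z‖)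
    (hξ : ξ * conj z = ‖z‖) : ξ = ζ⁻¹ := by
  refine Circle.ext (mul_right_cancel₀ ((map_ne_zero (starRingEnd ℂ)).mpr hz) ?_)
  rw [hξ, Circle.coe_inv_eq_conj, ← map_mul, hζ, Complex.conj_ofReal]

section Reflection

variable {V : Type*} [NormedAddCommGroup V] [InnerProductSpace ℂ V]

theorem complexReflection_apply (u x : V) : complexReflection u x = x - ⟪u, x⟫_ℂ • u := rfl

theorem complexReflection_isSymmetric (u : V) : (complexReflection u).IsSymmetric := by
  intro x y
  simp only [complexReflection_apply, inner_sub_left, inner_sub_right, inner_smul_left,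
    inner_smul_right, inner_conj_symm]
  ring

theorem complexReflection_mul_self {u : V} (hu : ⟪u, u⟫_ℂ = 2) :
    complexReflection u * complexReflection u = 1 := by
  ext x
  simp only [Module.End.mul_apply, complexReflection_apply, inner_sub_right, inner_smul_right,
    hu, Module.End.one_apply]
  module

theorem complexReflection_smul {c : ℂ} (hc : ‖c‖ = 1) (u : V) :
    complexReflection (c • u) = complexReflection u := by
  have hc' : conj c * c = 1 := by
    rw [Complex.conj_mul', hc]
    norm_num
  ext x
  simp only [complexReflection_apply, inner_smul_left, smul_smul]
  rw [show conj c * ⟪u, x⟫_ℂ * c = ⟪u, x⟫_ℂ by linear_combination ⟪u, x⟫_ℂ * hc']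

theorem complexReflection_mul_mul_self {u : V} (hu : ⟪u, u⟫_ℂ = 2) (x : V) :
    complexReflection u * complexReflection x * complexReflection u =
      complexReflection (complexReflection u x) := by
  ext y
  have hinv : complexReflection u (complexReflection u y) = y := by
    rw [← Module.End.mul_apply, complexReflection_mul_self hu, Module.End.one_apply]
  rw [Module.End.mul_apply, Module.End.mul_apply, complexReflection_apply x, map_sub, map_smul,
    hinv, complexReflection_apply (complexReflection u x), complexReflection_isSymmetric u x y]

theorem commute_complexReflection_of_inner_eq_zero {u w : V} (h : ⟪u, w⟫_ℂ = 0) :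
    Commute (complexReflection u) (complexReflection w) := by
  have h' : ⟪w, u⟫_ℂ = 0 := by rw [← inner_conj_symm, h, map_zero]
  ext x
  simp only [Module.End.mul_apply, complexReflection_apply, inner_sub_right, inner_smul_right,
    h, h', mul_zero, sub_zero]
  module

theorem complexReflection_braid {u w : V} (hu : ⟪u, u⟫_ℂ = 2) (hw : ⟪w, w⟫_ℂ = 2)
    (h : ‖⟪u, w⟫_ℂ‖ = 1) :
    complexReflection u * complexReflection w * complexReflection u =
      complexReflection w * complexReflection u * complexReflection w := by
  have hab : ⟪u, w⟫_ℂ * ⟪w, u⟫_ℂ = 1 := by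
    rw [← inner_conj_symm w u, Complex.mul_conj', h]
    norm_num
  rw [complexReflection_mul_mul_self hu, complexReflection_mul_mul_self hw,
    complexReflection_apply, complexReflection_apply,
    ← complexReflection_smul (c := -⟪u, w⟫_ℂ) (by simpa using h) (u - _)]
  congr 1
  linear_combination (norm := module) -hab • w

theorem complexReflection_mul_pow_three {u w : V} (hu : ⟪u, u⟫_ℂ = 2) (hw : ⟪w, w⟫_ℂ = 2)
    (h : ‖⟪u, w⟫_ℂ‖ = 1) : (complexReflection u * complexReflection w) ^ 3 = 1 := by
  set σu := complexReflection u
  set σw := complexReflection w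
  calc (σu * σw) ^ 3 = (σu * σw * σu) * (σw * σu * σw) := by noncomm_ring
    _ = σw * σu * (σw * σw) * σu * σw := by rw [complexReflection_braid hu hw h]; noncomm_ring
    _ = 1 := by
      rw [complexReflection_mul_self hw, mul_one, mul_assoc σw σu σu,
        complexReflection_mul_self hu, mul_one, complexReflection_mul_self hw]

theorem complexReflection_mul_apply_left {u : V} (hu : ⟪u, u⟫_ℂ = 2) (w : V) :
    (complexReflection u * complexReflection w) u =
      (⟪u, w⟫_ℂ * ⟪w, u⟫_ℂ - 1) • u - ⟪w, u⟫_ℂ • w := by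
  simp only [Module.End.mul_apply, complexReflection_apply, inner_sub_right, inner_smul_right, hu]
  module

theorem complexReflection_mul_sq_apply_left {u w : V} (hu : ⟪u, u⟫_ℂ = 2) (hw : ⟪w, w⟫_ℂ = 2) :
    ((complexReflection u * complexReflection w) ^ 2) u =
      ((‖⟪u, w⟫_ℂ‖ ^ 2 - 2 : ℝ) : ℂ) • (complexReflection u * complexReflection w) u - u := by
  set T := complexReflection u * complexReflection w
  have hab : ⟪u, w⟫_ℂ * ⟪w, u⟫_ℂ = (‖⟪u, w⟫_ℂ‖ : ℂ) ^ 2 := by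
    rw [← inner_conj_symm w u, Complex.mul_conj']
  have hTw : T w = ⟪u, w⟫_ℂ • u - w := by
    simp only [T, Module.End.mul_apply, complexReflection_apply, inner_sub_right,
      inner_smul_right, hw]
    module
  rw [pow_two, Module.End.mul_apply, complexReflection_mul_apply_left hu, map_sub, map_smul,
    map_smul, complexReflection_mul_apply_left hu, hTw]
  push_cast
  rw [← hab]
  module

theorem chebyshev_S_eval_of_pow_apply_eq_self {u w : V} (hu : ⟪u, u⟫_ℂ = 2)
    (hw : ⟪w, w⟫_ℂ = 2) (hind : LinearIndependent ℂ ![u, w]) (ha : ⟪u, w⟫_ℂ ≠ 0) {n : ℕ}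
    (hn : ((complexReflection u * complexReflection w) ^ n) u = u) :
    (S ℝ (n - 1)).eval (‖⟪u, w⟫_ℂ‖ ^ 2 - 2) = 0 ∧
      (S ℝ (n - 2)).eval (‖⟪u, w⟫_ℂ‖ ^ 2 - 2) = -1 := by
  set t : ℝ := ‖⟪u, w⟫_ℂ‖ ^ 2 - 2
  have hS (k : ℤ) : (S ℂ k).eval (t : ℂ) = (((S ℝ k).eval t : ℝ) : ℂ) :=
    (algebraMap_eval_S t k).symm
  rw [Module.End.pow_apply_eq_chebyshev_S (complexReflection_mul_sq_apply_left hu hw),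
    complexReflection_mul_apply_left hu, hS, hS] at hn
  set p := (S ℝ (n - 1)).eval t
  set q := (S ℝ (n - 2)).eval t
  obtain ⟨hu', hw'⟩ := LinearIndependent.pair_iff.mp hind
    ((p : ℂ) * (⟪u, w⟫_ℂ * ⟪w, u⟫_ℂ - 1) - q - 1) (-(p * ⟪w, u⟫_ℂ))
    (by linear_combination (norm := module) hn)
  have hb : ⟪w, u⟫_ℂ ≠ 0 := by rwa [← inner_conj_symm, _root_.map_ne_zero]
  have hp : p = 0 := by exact_mod_cast (mul_eq_zero.mp (neg_eq_zero.mp hw')).resolve_right hb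
  refine ⟨hp, ?_⟩
  rw [hp, Complex.ofReal_zero] at hu'
  exact_mod_cast (by linear_combination -hu' : (q : ℂ) = -1)

theorem norm_inner_eq_two_cos_of_orderOf_eq {u w : V} (hu : ⟪u, u⟫_ℂ = 2) (hw : ⟪w, w⟫_ℂ = 2)
    (hind : LinearIndependent ℂ ![u, w]) {n : ℕ} (hn : n ∈ ({2, 3, 4, 6} : Set ℕ))
    (hord : orderOf (complexReflection u * complexReflection w) = n) :
    ‖⟪u, w⟫_ℂ‖ = 2 * cos (π / n) := by
  by_cases ha : ⟪u, w⟫_ℂ = 0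
  · have hsq : (complexReflection u * complexReflection w) ^ 2 = 1 := by
      rw [(commute_complexReflection_of_inner_eq_zero ha).mul_pow, pow_two, pow_two,
        complexReflection_mul_self hu, complexReflection_mul_self hw, one_mul]
    have hdvd : n ∣ 2 := hord ▸ orderOf_dvd_of_pow_eq_one hsq
    have hle := Nat.le_of_dvd two_pos hdvd
    obtain rfl : n = 2 := by rcases hn with rfl | rfl | rfl | rfl <;> omega
    simp [ha]
  have hfix : ((complexReflection u * complexReflection w) ^ n) u = u := by
    rw [← hord, pow_orderOf_eq_one, Module.End.one_apply]
  obtain ⟨h₁, h₂⟩ := chebyshev_S_eval_of_pow_apply_eq_self hu hw hind ha hfix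
  rcases add_two_eq_sq_two_cos_of_S_eval hn h₁ h₂ with h | ⟨rfl, h⟩
  · have hn2 : (2 : ℝ) ≤ n := by rcases hn with rfl | rfl | rfl | rfl <;> norm_num
    have hcos := cos_pi_div_nonneg hn2
    exact (pow_left_inj₀ (norm_nonneg _) (by positivity) two_ne_zero).mp (by linarith)
  · have hnorm : ‖⟪u, w⟫_ℂ‖ = 1 := by
      rw [← pow_eq_one_iff_of_nonneg (norm_nonneg _) two_ne_zero]
      linarith
    have hdvd : 6 ∣ 3 :=
      hord ▸ orderOf_dvd_of_pow_eq_one (complexReflection_mul_pow_three hu hw hnorm)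
    norm_num at hdvd

theorem inner_eq_zero_iff_le_two_of_orderOf_eq {u w : V} (hu : ⟪u, u⟫_ℂ = 2)
    (hw : ⟪w, w⟫_ℂ = 2) (hind : LinearIndependent ℂ ![u, w]) {n : ℕ}
    (hn : n ∈ ({2, 3, 4, 6} : Set ℕ))
    (hord : orderOf (complexReflection u * complexReflection w) = n) :
    ⟪u, w⟫_ℂ = 0 ↔ n ≤ 2 := by
  rw [← norm_eq_zero, norm_inner_eq_two_cos_of_orderOf_eq hu hw hind hn hord]
  obtain rfl | h2 : n = 2 ∨ 2 < n := by rcases hn with rfl | rfl | rfl | rfl <;> norm_num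
  · simp
  · have := cos_pi_div_pos (by exact_mod_cast h2 : (2 : ℝ) < n)
    simp only [mul_eq_zero, two_ne_zero, false_or, this.ne', false_iff, not_le, h2]

end Reflection

/-- Abstract form of Lemma 3.7: given a family `(v s)` of pairwise linearly independent
vectors with `⟪v s, v s⟫ = 2`, such that `σ_{v s} ∘ σ_{v s'}` has order
`m s s' ∈ {2, 3, 4, 6}` for `s ≠ s'`, and the graph with an edge `{s, s'}` exactly when
`m s s' > 2` is a forest, the vectors can be rescaled by unit scalars `c s` so that all
pairings become the nonnegative real numbers `2 cos (π / m s s')`. -/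
theorem exists_unit_rescaling_inner_eq_two_cos
    {V : Type*} [NormedAddCommGroup V] [InnerProductSpace ℂ V]
    {S : Type*} [Fintype S] (v : S → V) (m : S → S → ℕ)
    (hv : ∀ s, ⟪v s, v s⟫_ℂ = 2)
    (hind : ∀ s s', s ≠ s' → LinearIndependent ℂ ![v s, v s'])
    (hord : ∀ s s', s ≠ s' →
      orderOf (complexReflection (v s) * complexReflection (v s')) = m s s')
    (hmem : ∀ s s', s ≠ s' → m s s' ∈ ({2, 3, 4, 6} : Set ℕ))
    (hforest : (SimpleGraph.fromRel (fun s s' => 2 < m s s')).IsAcyclic) :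
    ∃ c : S → ℂ, (∀ s, ‖c s‖ = 1) ∧
      ∀ s s', s ≠ s' →
        ⟪c s • v s, c s' • v s'⟫_ℂ = 2 * Real.cos (Real.pi / m s s') := by
  set G := SimpleGraph.fromRel fun s s' => 2 < m s s'
  have hnorm (s s' : S) (h : s ≠ s') : ‖⟪v s, v s'⟫_ℂ‖ = 2 * Real.cos (Real.pi / m s s') :=
    norm_inner_eq_two_cos_of_orderOf_eq (hv s) (hv s') (hind s s' h) (hmem s s' h) (hord s s' h)
  have hzero (s s' : S) (h : s ≠ s') : ⟪v s, v s'⟫_ℂ = 0 ↔ m s s' ≤ 2 :=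
    inner_eq_zero_iff_le_two_of_orderOf_eq (hv s) (hv s') (hind s s' h) (hmem s s' h)
      (hord s s' h)
  have hadj (s s' : S) (h : G.Adj s s') : ⟪v s, v s'⟫_ℂ ≠ 0 := by
    obtain ⟨h, hm | hm⟩ := h
    · exact (hzero s s' h).not.mpr hm.not_ge
    · exact inner_eq_zero_symm.not.mpr ((hzero s' s h.symm).not.mpr hm.not_ge)
  choose φ hφ using fun s s' => Circle.exists_mul_eq_norm ⟪v s, v s'⟫_ℂ
  obtain ⟨c, hc⟩ := hforest.exists_forall_adj_inv_mul_eq φ fun s s' h =>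
    Circle.eq_inv_of_mul_eq_norm (hadj s s' h) (hφ s s') <| by
      rw [inner_conj_symm, norm_inner_symm]
      exact hφ s' s
  refine ⟨fun s => c s, fun s => Circle.norm_coe _, fun s s' h => ?_⟩
  have hrhs : (2 * Real.cos (Real.pi / m s s') : ℂ) = ‖⟪v s, v s'⟫_ℂ‖ := by
    rw [hnorm s s' h, Complex.ofReal_mul, Complex.ofReal_ofNat]
  rw [inner_smul_left, inner_smul_right, hrhs]
  by_cases hG : G.Adj s s'
  · rw [← Circle.coe_inv_eq_conj, ← mul_assoc, ← Circle.coe_mul, hc s s' hG, hφ]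
  · simp [(hzero s s' h).mpr (not_lt.mp fun hm => hG ⟨h, Or.inl hm⟩)]
end
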